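/- With the subtyping relation of the type system, if T1*T2 <: LL then T1 <: LL and T2 <: LL. -/
import Mathlib


namespace Protocol

inductive Label : Type
  | LL | HL | HH
deriving DecidableEq

inductive Mult : Type
  | one | inf
deriving DecidableEq

/-- Cryptographic terms: bound names (nonces), free names, constants, keys,
variables, constructors `pk, vk, enc, aenc, sign, pair, h` and destructors
`dec, adec, checksign, π₁, π₂`. -/
inductive Term : Type
  | bname : ℕ → Term
  | fname : ℕ → Term
  | cst   : ℕ → Term
  | keyc  : ℕ → Term
  | var   : ℕ → Term
  | pk    : Term → Term
  | vk    : Term → Term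
  | enc   : Term → Term → Term
  | aenc  : Term → Term → Term
  | sign  : Term → Term → Term
  | pr    : Term → Term → Term
  | hsh   : Term → Term
  | dec   : Term → Term → Term
  | adec  : Term → Term → Term
  | chk   : Term → Term → Term
  | fst   : Term → Term
  | snd   : Term → Term
deriving DecidableEq

namespace Term

/-- A term is ground if it contains no variables. -/
def Ground : Term → Prop
  | bname _ => True
  | fname _ => True
  | cst _ => True
  | keyc _ => True
  | var _ => False
  | pk t => Ground t
  | vk t => Ground t
  | enc t u => Ground t ∧ Ground u
  | aenc t u => Ground t ∧ Ground u
  | sign t u => Ground t ∧ Ground u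
  | pr t u => Ground t ∧ Ground u
  | hsh t => Ground t
  | dec t u => Ground t ∧ Ground u
  | adec t u => Ground t ∧ Ground u
  | chk t u => Ground t ∧ Ground u
  | fst t => Ground t
  | snd t => Ground t

/-- The set of variables of a term. -/
def varsOf : Term → Set ℕ
  | bname _ => ∅
  | fname _ => ∅
  | cst _ => ∅
  | keyc _ => ∅
  | var x => {x}
  | pk t => varsOf t
  | vk t => varsOf t
  | enc t u => varsOf t ∪ varsOf u
  | aenc t u => varsOf t ∪ varsOf u
  | sign t u => varsOf t ∪ varsOf u
  | pr t u => varsOf t ∪ varsOf u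
  | hsh t => varsOf t
  | dec t u => varsOf t ∪ varsOf u
  | adec t u => varsOf t ∪ varsOf u
  | chk t u => varsOf t ∪ varsOf u
  | fst t => varsOf t
  | snd t => varsOf t

/-- Application of a (total) substitution to a term. -/
def subst (σ : ℕ → Term) : Term → Term
  | bname n => bname n
  | fname n => fname n
  | cst a => cst a
  | keyc k => keyc k
  | var x => σ x
  | pk t => pk (subst σ t)
  | vk t => vk (subst σ t)
  | enc t u => enc (subst σ t) (subst σ u)
  | aenc t u => aenc (subst σ t) (subst σ u)
  | sign t u => sign (subst σ t) (subst σ u)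
  | pr t u => pr (subst σ t) (subst σ u)
  | hsh t => hsh (subst σ t)
  | dec t u => dec (subst σ t) (subst σ u)
  | adec t u => adec (subst σ t) (subst σ u)
  | chk t u => chk (subst σ t) (subst σ u)
  | fst t => fst (subst σ t)
  | snd t => snd (subst σ t)

/-- Application of a partial substitution (identity outside its domain). -/
def psubst (σ : ℕ → Option Term) (t : Term) : Term :=
  subst (fun x => (σ x).getD (var x)) t

/-- Evaluation of a term: applies the destructors, requiring atomic keys in
key positions; returns `none` (⊥) in case of failure. -/
def eval : Term → Option Term
  | bname n => some (bname n)
  | fname n => some (fname n)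
  | cst a => some (cst a)
  | keyc k => some (keyc k)
  | var x => some (var x)
  | pk t =>
      match eval t with
      | some (keyc k) => some (pk (keyc k))
      | _ => none
  | vk t =>
      match eval t with
      | some (keyc k) => some (vk (keyc k))
      | _ => none
  | hsh t =>
      match eval t with
      | some t' => some (hsh t')
      | _ => none
  | pr t u =>
      match eval t, eval u with
      | some t', some u' => some (pr t' u')
      | _, _ => none
  | enc t u =>
      match eval t, eval u with
      | some t', some (keyc k) => some (enc t' (keyc k))
      | _, _ => none
  | sign t u =>
      match eval t, eval u with
      | some t', some (keyc k) => some (sign t' (keyc k))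
      | _, _ => none
  | aenc t u =>
      match eval t, eval u with
      | some t', some (pk (keyc k)) => some (aenc t' (pk (keyc k)))
      | _, _ => none
  | dec t u =>
      match eval t, eval u with
      | some (enc t3 t4), some t2 => if t4 = t2 then some t3 else none
      | _, _ => none
  | adec t u =>
      match eval t, eval u with
      | some (aenc t3 (pk t4)), some t2 => if t4 = t2 then some t3 else none
      | _, _ => none
  | chk t u =>
      match eval t, eval u with
      | some (sign t3 t4), some (vk t5) => if t4 = t5 then some t3 else none
      | _, _ => none
  | fst t =>
      match eval t with
      | some (pr t1 _) => some t1
      | _ => none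
  | snd t =>
      match eval t with
      | some (pr _ t2) => some t2
      | _ => none

end Term

/-- Messages: constructor-only terms with atomic keys in key positions. -/
inductive IsMessage : Term → Prop
  | bname (n : ℕ) : IsMessage (.bname n)
  | fname (n : ℕ) : IsMessage (.fname n)
  | cst (a : ℕ) : IsMessage (.cst a)
  | keyc (k : ℕ) : IsMessage (.keyc k)
  | var (x : ℕ) : IsMessage (.var x)
  | pk (k : ℕ) : IsMessage (.pk (.keyc k))
  | vk (k : ℕ) : IsMessage (.vk (.keyc k))
  | enc {t : Term} (k : ℕ) : IsMessage t → IsMessage (.enc t (.keyc k))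
  | aenc {t : Term} (k : ℕ) : IsMessage t → IsMessage (.aenc t (.pk (.keyc k)))
  | sign {t : Term} (k : ℕ) : IsMessage t → IsMessage (.sign t (.keyc k))
  | pr {t u : Term} : IsMessage t → IsMessage u → IsMessage (.pr t u)
  | hsh {t : Term} : IsMessage t → IsMessage (.hsh t)

/-- Types of the type system. `refin l l' a m n` is the refinement type
⟦τ_m^{l,a} ; τ_n^{l',a}⟧. -/
inductive Ty : Type
  | lab : Label → Ty
  | prod : Ty → Ty → Ty
  | keyT : Label → Ty → Ty
  | encT : Ty → ℕ → Ty
  | aencT : Ty → ℕ → Ty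
  | refin : Label → Label → Mult → Term → Term → Ty
  | union : Ty → Ty → Ty

/-- The subtyping relation, generated by the rules SRefl, STrans, SHigh,
SPairL, SPair, SPairS, SPairS', SKey, SEnc, SAenc. -/
inductive Sub : Ty → Ty → Prop
  | srefl (T : Ty) : Sub T T
  | strans {T T' T'' : Ty} : Sub T T' → Sub T' T'' → Sub T T''
  | shigh (T : Ty) : Sub T (.lab Label.HL)
  | spairL : Sub (.prod (.lab Label.LL) (.lab Label.LL)) (.lab Label.LL)
  | spair {T1 T1' T2 T2' : Ty} :
      Sub T1 T1' → Sub T2 T2' → Sub (.prod T1 T2) (.prod T1' T2')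
  | spairS (T : Ty) : Sub (.prod (.lab Label.HH) T) (.lab Label.HH)
  | spairS' (T : Ty) : Sub (.prod T (.lab Label.HH)) (.lab Label.HH)
  | skey (l : Label) (T : Ty) : Sub (.keyT l T) (.lab l)
  | senc {T T' : Ty} {k : ℕ} : Sub T T' → Sub (.encT T k) (.encT T' k)
  | saenc {T T' : Ty} {k : ℕ} : Sub T T' → Sub (.aencT T k) (.aencT T' k)

/-- The branches of a type: the set of its non-union disjuncts. -/
def branches : Ty → Set Ty
  | .union T T' => branches T ∪ branches T'
  | T => {T}

/-- A typing environment: a partial map from nonces to nonce types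
τ_n^{l,a}, from keys to key types key^l(T), and from variables to types. -/
structure Env : Type where
  nonce : ℕ → Option (Label × Mult)
  keyE : ℕ → Option (Label × Ty)
  varE : ℕ → Option Ty

/-- All (bound) names, keys and variables of the term are in the domain of Γ
(free names and constants are unrestricted). -/
def AtomsInDom (Γ : Env) : Term → Prop
  | .bname n => (Γ.nonce n).isSome
  | .fname _ => True
  | .cst _ => True
  | .keyc k => (Γ.keyE k).isSome
  | .var x => (Γ.varE x).isSome
  | .pk t => AtomsInDom Γ t
  | .vk t => AtomsInDom Γ t
  | .enc t u => AtomsInDom Γ t ∧ AtomsInDom Γ u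
  | .aenc t u => AtomsInDom Γ t ∧ AtomsInDom Γ u
  | .sign t u => AtomsInDom Γ t ∧ AtomsInDom Γ u
  | .pr t u => AtomsInDom Γ t ∧ AtomsInDom Γ u
  | .hsh t => AtomsInDom Γ t
  | .dec t u => AtomsInDom Γ t ∧ AtomsInDom Γ u
  | .adec t u => AtomsInDom Γ t ∧ AtomsInDom Γ u
  | .chk t u => AtomsInDom Γ t ∧ AtomsInDom Γ u
  | .fst t => AtomsInDom Γ t
  | .snd t => AtomsInDom Γ t

/-- `M` is a nonce of type τ_M^{l,1} in Γ, or a free name/constant and l = LL. -/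
def NonceOrPub (Γ : Env) (l : Label) (M : Term) : Prop :=
  (∃ m, M = Term.bname m ∧ Γ.nonce m = some (l, Mult.one)) ∨
  (((∃ a, M = Term.cst a) ∨ (∃ n, M = Term.fname n)) ∧ l = Label.LL)

/-- The typing judgment for messages: Γ ⊢ M ~ N : T → c. -/
inductive TypeE (Γ : Env) : Term → Term → Ty → Set (Term × Term) → Prop
  | tnonce {m n : ℕ} {l : Label} {a : Mult} :
      Γ.nonce m = some (l, a) → Γ.nonce n = some (l, a) →
      (l = Label.HH ∨ l = Label.HL) →
      TypeE Γ (.bname m) (.bname n) (.lab l) ∅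
  | tnonceL {n : ℕ} {a : Mult} :
      Γ.nonce n = some (Label.LL, a) →
      TypeE Γ (.bname n) (.bname n) (.lab Label.LL) ∅
  | tcst {a : ℕ} : TypeE Γ (.cst a) (.cst a) (.lab Label.LL) ∅
  | tfn {n : ℕ} : TypeE Γ (.fname n) (.fname n) (.lab Label.LL) ∅
  | tpubkey {k : ℕ} : (Γ.keyE k).isSome →
      TypeE Γ (.pk (.keyc k)) (.pk (.keyc k)) (.lab Label.LL) ∅
  | tvkey {k : ℕ} : (Γ.keyE k).isSome →
      TypeE Γ (.vk (.keyc k)) (.vk (.keyc k)) (.lab Label.LL) ∅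
  | tkey {k : ℕ} {l : Label} {T : Ty} : Γ.keyE k = some (l, T) →
      TypeE Γ (.keyc k) (.keyc k) (.keyT l T) ∅
  | tvar {x : ℕ} {T : Ty} : Γ.varE x = some T →
      TypeE Γ (.var x) (.var x) T ∅
  | tpair {M N M' N' : Term} {T T' : Ty} {c c' : Set (Term × Term)} :
      TypeE Γ M N T c → TypeE Γ M' N' T' c' →
      TypeE Γ (.pr M M') (.pr N N') (.prod T T') (c ∪ c')
  | tenc {M N : Term} {T : Ty} {c : Set (Term × Term)} {k : ℕ} :
      TypeE Γ M N T c →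
      TypeE Γ (.enc M (.keyc k)) (.enc N (.keyc k)) (.encT T k) c
  | tencH {M N : Term} {T : Ty} {c : Set (Term × Term)} {k : ℕ} :
      TypeE Γ M N (.encT T k) c → Γ.keyE k = some (Label.HH, T) →
      TypeE Γ M N (.lab Label.LL) (c ∪ {(M, N)})
  | tencL {M N : Term} {T : Ty} {c : Set (Term × Term)} {k : ℕ} :
      TypeE Γ M N (.encT (.lab Label.LL) k) c → Γ.keyE k = some (Label.LL, T) →
      TypeE Γ M N (.lab Label.LL) c
  | taenc {M N : Term} {T : Ty} {c : Set (Term × Term)} {k : ℕ} :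
      TypeE Γ M N T c →
      TypeE Γ (.aenc M (.pk (.keyc k))) (.aenc N (.pk (.keyc k))) (.aencT T k) c
  | taencH {M N : Term} {T : Ty} {c : Set (Term × Term)} {k : ℕ} :
      TypeE Γ M N (.aencT T k) c → Γ.keyE k = some (Label.HH, T) →
      TypeE Γ M N (.lab Label.LL) (c ∪ {(M, N)})
  | taencL {M N : Term} {c : Set (Term × Term)} {k : ℕ} :
      TypeE Γ M N (.aencT (.lab Label.LL) k) c → (Γ.keyE k).isSome →
      TypeE Γ M N (.lab Label.LL) c
  | tsignH {M N : Term} {T : Ty} {c c' : Set (Term × Term)} {k : ℕ} :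
      TypeE Γ M N T c → TypeE Γ M N (.lab Label.LL) c' →
      Γ.keyE k = some (Label.HH, T) →
      TypeE Γ (.sign M (.keyc k)) (.sign N (.keyc k)) (.lab Label.LL)
        (c ∪ c' ∪ {(Term.sign M (.keyc k), Term.sign N (.keyc k))})
  | tsignL {M N : Term} {T : Ty} {c : Set (Term × Term)} {k : ℕ} :
      TypeE Γ M N (.lab Label.LL) c → Γ.keyE k = some (Label.LL, T) →
      TypeE Γ (.sign M (.keyc k)) (.sign N (.keyc k)) (.lab Label.LL) c
  | thash {M N : Term} : AtomsInDom Γ M → AtomsInDom Γ N →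
      TypeE Γ (.hsh M) (.hsh N) (.lab Label.LL) {(Term.hsh M, Term.hsh N)}
  | thashL {M N : Term} {c : Set (Term × Term)} :
      TypeE Γ M N (.lab Label.LL) c →
      TypeE Γ (.hsh M) (.hsh N) (.lab Label.LL) c
  | thigh {M N : Term} : AtomsInDom Γ M → AtomsInDom Γ N →
      TypeE Γ M N (.lab Label.HL) ∅
  | tsub {M N : Term} {T T' : Ty} {c : Set (Term × Term)} :
      TypeE Γ M N T' c → Sub T' T → TypeE Γ M N T c
  | torL {M N : Term} {T T' : Ty} {c : Set (Term × Term)} :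
      TypeE Γ M N T c → TypeE Γ M N (.union T T') c
  | torR {M N : Term} {T T' : Ty} {c : Set (Term × Term)} :
      TypeE Γ M N T' c → TypeE Γ M N (.union T T') c
  | tlr1 {M N : Term} {l l' : Label} :
      NonceOrPub Γ l M → NonceOrPub Γ l' N →
      TypeE Γ M N (.refin l l' Mult.one M N) ∅
  | tlrInf {m n : ℕ} {l l' : Label} :
      Γ.nonce m = some (l, Mult.inf) → Γ.nonce n = some (l', Mult.inf) →
      TypeE Γ (.bname m) (.bname n) (.refin l l' Mult.inf (.bname m) (.bname n)) ∅
  | tlr' {M N m n : Term} {l : Label} {a : Mult} {c : Set (Term × Term)} :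
      TypeE Γ M N (.refin l l a m n) c → (l = Label.HL ∨ l = Label.HH) →
      TypeE Γ M N (.lab l) c
  | tlrL' {M N n : Term} {a : Mult} {c : Set (Term × Term)} :
      TypeE Γ M N (.refin Label.LL Label.LL a n n) c →
      TypeE Γ M N (.lab Label.LL) c
  | tlrVar {x y : ℕ} {l l' l'' l''' : Label} {m n m' n' : Term} :
      TypeE Γ (.var x) (.var x) (.refin l l' Mult.one m n) ∅ →
      TypeE Γ (.var y) (.var y) (.refin l'' l''' Mult.one m' n') ∅ →
      TypeE Γ (.var x) (.var y) (.refin l l''' Mult.one m n') ∅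

/-- Attacker recipes over a set ι of handles: attacker terms built from
handles, free names, constants, constructors and destructors. -/
inductive Recipe (ι : Type) : Type
  | hvar : ι → Recipe ι
  | rfn : ℕ → Recipe ι
  | rcst : ℕ → Recipe ι
  | rpk : Recipe ι → Recipe ι
  | rvk : Recipe ι → Recipe ι
  | renc : Recipe ι → Recipe ι → Recipe ι
  | raenc : Recipe ι → Recipe ι → Recipe ι
  | rsign : Recipe ι → Recipe ι → Recipe ι
  | rpr : Recipe ι → Recipe ι → Recipe ι
  | rhsh : Recipe ι → Recipe ι
  | rdec : Recipe ι → Recipe ι → Recipe ι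
  | radec : Recipe ι → Recipe ι → Recipe ι
  | rchk : Recipe ι → Recipe ι → Recipe ι
  | rfst : Recipe ι → Recipe ι
  | rsnd : Recipe ι → Recipe ι

/-- Application of a recipe to a frame. -/
def rsubst {ι : Type} (φ : ι → Term) : Recipe ι → Term
  | .hvar i => φ i
  | .rfn n => .fname n
  | .rcst a => .cst a
  | .rpk r => .pk (rsubst φ r)
  | .rvk r => .vk (rsubst φ r)
  | .renc r s => .enc (rsubst φ r) (rsubst φ s)
  | .raenc r s => .aenc (rsubst φ r) (rsubst φ s)
  | .rsign r s => .sign (rsubst φ r) (rsubst φ s)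
  | .rpr r s => .pr (rsubst φ r) (rsubst φ s)
  | .rhsh r => .hsh (rsubst φ r)
  | .rdec r s => .dec (rsubst φ r) (rsubst φ s)
  | .radec r s => .adec (rsubst φ r) (rsubst φ s)
  | .rchk r s => .chk (rsubst φ r) (rsubst φ s)
  | .rfst r => .fst (rsubst φ r)
  | .rsnd r => .snd (rsubst φ r)

/-- A recipe built from constructors only (no destructors). -/
def CtorOnly {ι : Type} : Recipe ι → Prop
  | .hvar _ => True
  | .rfn _ => True
  | .rcst _ => True
  | .rpk r => CtorOnly r
  | .rvk r => CtorOnly r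
  | .renc r s => CtorOnly r ∧ CtorOnly s
  | .raenc r s => CtorOnly r ∧ CtorOnly s
  | .rsign r s => CtorOnly r ∧ CtorOnly s
  | .rpr r s => CtorOnly r ∧ CtorOnly s
  | .rhsh r => CtorOnly r
  | .rdec _ _ => False
  | .radec _ _ => False
  | .rchk _ _ => False
  | .rfst _ => False
  | .rsnd _ => False

/-- The attacker's initial knowledge φ_LL(Γ): low keys, all public and
verification keys, and low nonces of Γ. -/
def Knowledge (Γ : Env) : Set Term :=
  {t | ∃ k T, Γ.keyE k = some (Label.LL, T) ∧ t = Term.keyc k} ∪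
  {t | ∃ k, (Γ.keyE k).isSome ∧ (t = Term.pk (.keyc k) ∨ t = Term.vk (.keyc k))} ∪
  {t | ∃ n a, Γ.nonce n = some (Label.LL, a) ∧ t = Term.bname n}

/-- The frame with handles for the knowledge of Γ and for the constraints of
c, where each constraint contributes the entry `f p` (e.g. its left or right
message). -/
def frameOf (Γ : Env) (c : Set (Term × Term)) (f : Term × Term → Term) :
    (↥(Knowledge Γ) ⊕ ↥c) → Term
  | Sum.inl t => t.1
  | Sum.inr p => f p.1

/-- Static equivalence of two frames with the same handles: every pair of
attacker recipes evaluates equal (under destructor evaluation, including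
failure) on one frame iff it does on the other. -/
def StatEq {ι : Type} (φ φ' : ι → Term) : Prop :=
  ∀ R S : Recipe ι,
    (Term.eval (rsubst φ R) = Term.eval (rsubst φ S)) ↔
      (Term.eval (rsubst φ' R) = Term.eval (rsubst φ' S))

/-- Γ restricted to names and keys. -/
def novar (Γ : Env) : Env := { Γ with varE := fun _ => none }

/-- Γ' is a sub-environment of Γ with the same names and keys. -/
def SubEnv (Γ' Γ : Env) : Prop :=
  Γ'.nonce = Γ.nonce ∧ Γ'.keyE = Γ.keyE ∧
    ∀ x T, Γ'.varE x = some T → Γ.varE x = some T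

/-- σ, σ' are ground substitutions with domain dom(Γ_X), well-typed in Γ:
for each variable x, Γ_{N,K} ⊢ σ(x) ~ σ'(x) : Γ(x) → c_x for some c_x. -/
def WellTypedSubst (Γ : Env) (σ σ' : ℕ → Option Term) : Prop :=
  (∀ x t, σ x = some t → t.Ground) ∧
  (∀ x t, σ' x = some t → t.Ground) ∧
  (∀ x, (σ x).isSome ↔ (Γ.varE x).isSome) ∧
  (∀ x, (σ' x).isSome ↔ (Γ.varE x).isSome) ∧
  (∀ x T, Γ.varE x = some T →
    ∃ M N cx, σ x = some M ∧ σ' x = some N ∧ TypeE (novar Γ) M N T cx)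

/-- Consistency of a set of constraints c in an environment Γ: for all
subsets c' ⊆ c and sub-environments Γ' ⊆ Γ with the same names/keys and
vars(c') ⊆ dom(Γ'), and all ground substitutions σ, σ' well-typed in Γ',
the frames φ_LL(Γ) ∪ φ_l(c')σ and φ_LL(Γ) ∪ φ_r(c')σ' are statically
equivalent. -/
def Consistent (c : Set (Term × Term)) (Γ : Env) : Prop :=
  ∀ c' : Set (Term × Term), c' ⊆ c →
  ∀ Γ' : Env, SubEnv Γ' Γ →
    (∀ p ∈ c', p.1.varsOf ∪ p.2.varsOf ⊆ {x | (Γ'.varE x).isSome}) →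
  ∀ σ σ' : ℕ → Option Term, WellTypedSubst Γ' σ σ' →
    StatEq (frameOf Γ c' (fun p => Term.psubst σ p.1))
           (frameOf Γ c' (fun p => Term.psubst σ' p.2))

/-- Two environments are compatible if they agree on the intersection of
their domains. -/
def Compatible (Γ Γ' : Env) : Prop :=
  (∀ n v w, Γ.nonce n = some v → Γ'.nonce n = some w → v = w) ∧
  (∀ k v w, Γ.keyE k = some v → Γ'.keyE k = some w → v = w) ∧
  (∀ x v w, Γ.varE x = some v → Γ'.varE x = some w → v = w)

/-- Union of two (compatible) environments. -/
def unionEnv (Γ Γ' : Env) : Env where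
  nonce := fun n => Γ.nonce n <|> Γ'.nonce n
  keyE := fun k => Γ.keyE k <|> Γ'.keyE k
  varE := fun x => Γ.varE x <|> Γ'.varE x

/-- A constraint set: a set of pairs (c, Γ) of a set of constraints and a
typing environment. -/
abbrev CSet : Type := Set (Set (Term × Term) × Env)

/-- The product union C ∪× C' of two constraint sets. -/
def prodUnion (C C' : CSet) : CSet :=
  {q | ∃ c Γ c' Γ', (c, Γ) ∈ C ∧ (c', Γ') ∈ C' ∧ Compatible Γ Γ' ∧
       q = (c ∪ c', unionEnv Γ Γ')}

/-- C ∪∀ c' : add the set of constraints c' to every element of C. -/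
def forallUnion (C : CSet) (c' : Set (Term × Term)) : CSet :=
  (fun q => (q.1 ∪ c', q.2)) '' C

/-- Instantiation of a set of constraints: [c]_{σ,σ'} = {Mσ ~ Nσ'}. -/
def instc (σ σ' : ℕ → Option Term) (c : Set (Term × Term)) : Set (Term × Term) :=
  (fun p => (Term.psubst σ p.1, Term.psubst σ' p.2)) '' c

/-- Instantiation of a constraint set (environments are unchanged). -/
def instCS (σ σ' : ℕ → Option Term) (C : CSet) : CSet :=
  (fun q => (instc σ σ' q.1, q.2)) '' C

/-- A constraint set is consistent if each of its elements is. -/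
def ConsistentCS (C : CSet) : Prop := ∀ q ∈ C, Consistent q.1 q.2

/-- Auxiliary semantic "lowness" predicate. -/
def LowP : Ty → Prop
  | .lab Label.LL => True
  | .prod A B => Sub A (.lab Label.LL) ∧ Sub B (.lab Label.LL)
  | .keyT Label.LL _ => True
  | _ => False

lemma lowP_anti {A B : Ty} (h : Sub A B) : LowP B → LowP A := by
  induction h with
  | srefl T => exact id
  | strans _ _ ih1 ih2 => exact fun hb => ih1 (ih2 hb)
  | shigh T => intro hb; exact hb.elim
  | spairL => intro _; exact ⟨Sub.srefl _, Sub.srefl _⟩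
  | spair h1 h2 _ _ =>
      rintro ⟨hb1, hb2⟩
      exact ⟨Sub.strans h1 hb1, Sub.strans h2 hb2⟩
  | spairS T => intro hb; exact hb.elim
  | spairS' T => intro hb; exact hb.elim
  | skey l T =>
      cases l with
      | LL => intro _; trivial
      | HL => intro hb; exact hb.elim
      | HH => intro hb; exact hb.elim
  | senc _ _ => intro hb; exact hb.elim
  | saenc _ _ => intro hb; exact hb.elim

/-- if T1*T2 <: LL then T1 <: LL and T2 <: LL. -/
theorem pair_sub_low (T1 T2 : Ty) (h : Sub (Ty.prod T1 T2) (Ty.lab Label.LL)) :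
    Sub T1 (Ty.lab Label.LL) ∧ Sub T2 (Ty.lab Label.LL) :=
  lowP_anti h trivial

end Protocol
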